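/- arXiv:1411.5840 — 5 statements merged into one kernel-verified Lean document; each statement's English description precedes it below -/
import Mathlib

section
/- The system of equations in real variables A₂ > 0, A₃, B₃, A₄, B₄ with parameters c > 0, s ≠ 0, c² + s² = 1, given by (A₃A₄, A₂B₃, B₃B₄) = k(−(c²+5s²), 5sc, c²) and (A₂A₃, A₃B₄, B₃A₄) = l(5s, c, c) for some k, l ∈ ℝ, forces k = l = 0, and hence A₃ = B₃ = 0. -/
/-! Pairing the four unknowns as `(A₃A₄)(B₃B₄)` and as `(A₃B₄)(B₃A₄)` computes the same product in
two ways: `-k²c²(c² + 5s²) = l²c²`. A negative multiple of `k²` can only equal a nonnegative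
multiple of `l²` when both vanish, and then `A₂A₃ = A₂B₃ = 0` with `A₂ ≠ 0`. -/

theorem eq_zero_and_eq_zero_of_sq_mul_add_sq_mul_eq_zero {R : Type*} [Ring R] [LinearOrder R]
    [IsStrictOrderedRing R] {a b k l : R} (ha : 0 < a) (hb : 0 < b)
    (h : k ^ 2 * a + l ^ 2 * b = 0) : k = 0 ∧ l = 0 := by
  obtain ⟨hk, hl⟩ := (add_eq_zero_iff_of_nonneg (by positivity) (by positivity)).1 h
  exact ⟨pow_eq_zero_iff two_ne_zero |>.1 ((mul_eq_zero.1 hk).resolve_right ha.ne'),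
    pow_eq_zero_iff two_ne_zero |>.1 ((mul_eq_zero.1 hl).resolve_right hb.ne')⟩

theorem key_algebraic_step_forces_zero_general
    (c s A₂ A₃ B₃ A₄ B₄ k l : ℝ)
    (hc : 0 < c) (hA₂ : 0 < A₂)
    (h1 : A₃ * A₄ = k * (-(c ^ 2 + 5 * s ^ 2)))
    (h2 : A₂ * B₃ = k * (5 * s * c))
    (h3 : B₃ * B₄ = k * c ^ 2)
    (h4 : A₂ * A₃ = l * (5 * s))
    (h5 : A₃ * B₄ = l * c)
    (h6 : B₃ * A₄ = l * c) :
    k = 0 ∧ l = 0 ∧ A₃ = 0 ∧ B₃ = 0 := by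
  have hpairing : k ^ 2 * ((c ^ 2 + 5 * s ^ 2) * c ^ 2) + l ^ 2 * c ^ 2 = 0 := by
    have hsame : (A₃ * A₄) * (B₃ * B₄) = (A₃ * B₄) * (B₃ * A₄) := by ring
    rw [h1, h3, h5, h6] at hsame
    linear_combination -hsame
  obtain ⟨rfl, rfl⟩ :=
    eq_zero_and_eq_zero_of_sq_mul_add_sq_mul_eq_zero (by positivity) (by positivity) hpairing
  refine ⟨rfl, rfl, ?_, ?_⟩
  · exact (mul_eq_zero.1 (by simpa using h4)).resolve_left hA₂.ne'
  · exact (mul_eq_zero.1 (by simpa using h2)).resolve_left hA₂.ne'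

theorem key_algebraic_step_forces_zero
    (c s A₂ A₃ B₃ A₄ B₄ k l : ℝ)
    (hc : 0 < c) (hs : s ≠ 0) (hcs : c ^ 2 + s ^ 2 = 1) (hA₂ : 0 < A₂)
    (h1 : A₃ * A₄ = k * (-(c ^ 2 + 5 * s ^ 2)))
    (h2 : A₂ * B₃ = k * (5 * s * c))
    (h3 : B₃ * B₄ = k * c ^ 2)
    (h4 : A₂ * A₃ = l * (5 * s))
    (h5 : A₃ * B₄ = l * c)
    (h6 : B₃ * A₄ = l * c) :
    k = 0 ∧ l = 0 ∧ A₃ = 0 ∧ B₃ = 0 :=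
  key_algebraic_step_forces_zero_general c s A₂ A₃ B₃ A₄ B₄ k l hc hA₂ h1 h2 h3 h4 h5 h6
end

section
/- Let T³ act on S⁷ ⊂ ℂ⁴ by (e^{iα}, e^{iβ}, e^{iγ})·z = (e^{i(α+β)}z₁, e^{i(α−β)}z₂, e^{i(α+γ)}z₃, e^{i(α−γ)}z₄). For p₀ = (x₁, x₂, x₃, x₄ + iy₄) with x₁, x₂, x₃ > 0 real and y₄ real, x₁²+x₂²+x₃²+x₄²+y₄² = 1, the system ζⱼ(p₀) = 0 for j = 1,…,4, where (ζ₁,ζ₂,ζ₃,ζ₄) = (−iz₂z̄₃z̄₄, −iz₁z̄₃z̄₄, iz̄₁z̄₂z₄, iz̄₁z̄₂z₃) − 4Im(z₁z₂z̄₃z̄₄)(z̄₁,z̄₂,z̄₃,z̄₄), has exactly the solutions x₁ = x₂ = x₃ = 1/2, x₄ = 0, y₄ = ±1/2. -/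
/-!
With z₁, z₂, z₃ real and m = Im(z₁z₂z̄₃z̄₄) = -x₁x₂x₃y₄, each ζⱼ is a nonzero real monomial
times a complex number with simple real and imaginary parts. The imaginary part of ζ₄ is
1 - 4y₄², so y₄ = ±1/2; in particular y₄ ≠ 0, and the real parts of ζ₁, ζ₂, ζ₃, which are
(4xⱼ² - 1)y₄, then force xⱼ = 1/2, while the imaginary part of ζ₁ gives x₄ = 0.
-/

open Complex ComplexConjugate

theorem ofReal_add_ofReal_mul_I_eq_zero_iff (u v : ℝ) : (u : ℂ) + v * I = 0 ↔ u = 0 ∧ v = 0 := by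
  simp [Complex.ext_iff]

theorem ofReal_mul_add_ofReal_mul_I_eq_zero_iff {r : ℝ} (hr : r ≠ 0) (u v : ℝ) :
    (r : ℂ) * (u + v * I) = 0 ↔ u = 0 ∧ v = 0 := by
  rw [mul_eq_zero, or_iff_right (ofReal_ne_zero.mpr hr), ofReal_add_ofReal_mul_I_eq_zero_iff]

theorem im_ofReal_mul_ofReal_mul_conj (a b c x y : ℝ) :
    ((a : ℂ) * b * conj (c : ℂ) * conj (x + y * I)).im = -(a * b * c * y) := by
  simp only [map_add, map_mul, conj_ofReal, conj_I, mul_im, mul_re, add_re, add_im,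
    ofReal_re, ofReal_im, I_re, I_im, neg_re, neg_im]
  ring

-- ζ₂ is the instance with `a` and `b` exchanged.
theorem zeta₁_eq {a b c m : ℝ} (x y : ℝ) (hm : m = -(a * b * c * y)) :
    -I * b * conj (c : ℂ) * conj (x + y * I) - 4 * m * conj (a : ℂ) =
      (b * c : ℝ) * (((4 * a ^ 2 - 1) * y : ℝ) + (-x : ℝ) * I) := by
  simp only [hm, map_add, map_mul, conj_ofReal, conj_I]
  push_cast
  linear_combination (b * c * y : ℂ) * I_sq

theorem zeta₃_eq {a b c m : ℝ} (x y : ℝ) (hm : m = -(a * b * c * y)) :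
    I * conj (a : ℂ) * conj (b : ℂ) * (x + y * I) - 4 * m * conj (c : ℂ) =
      (a * b : ℝ) * (((4 * c ^ 2 - 1) * y : ℝ) + (x : ℝ) * I) := by
  simp only [hm, conj_ofReal]
  push_cast
  linear_combination (a * b * y : ℂ) * I_sq

theorem zeta₄_eq {a b c m : ℝ} (x y : ℝ) (hm : m = -(a * b * c * y)) :
    I * conj (a : ℂ) * conj (b : ℂ) * c - 4 * m * conj (x + y * I : ℂ) =
      (a * b * c : ℝ) * ((4 * x * y : ℝ) + (1 - 4 * y ^ 2 : ℝ) * I) := by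
  simp only [hm, map_add, map_mul, conj_ofReal, conj_I]
  push_cast
  ring

theorem eq_one_half_of_four_sq_sub_one_mul_eq_zero {a y : ℝ} (ha : 0 < a)
    (h : (4 * a ^ 2 - 1) * y = 0) (hy : y ≠ 0) : a = 1 / 2 := by
  have : a ^ 2 = (1 / 2) ^ 2 := by linarith [(mul_eq_zero.mp h).resolve_right hy]
  exact (pow_left_inj₀ ha.le (by norm_num) two_ne_zero).mp this

theorem four_sq_eq_one_iff {y : ℝ} : 4 * y ^ 2 = 1 ↔ y = 1 / 2 ∨ y = -(1 / 2) := by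
  rw [← sq_eq_sq_iff_eq_or_eq_neg]
  constructor <;> intro h <;> linarith

theorem T3_associative_orbit_equations_general (x₁ x₂ x₃ x₄ y₄ : ℝ)
    (h₁ : 0 < x₁) (h₂ : 0 < x₂) (h₃ : 0 < x₃) :
    let z₁ : ℂ := (x₁ : ℂ)
    let z₂ : ℂ := (x₂ : ℂ)
    let z₃ : ℂ := (x₃ : ℂ)
    let z₄ : ℂ := (x₄ : ℂ) + (y₄ : ℂ) * I
    let m : ℝ := (z₁ * z₂ * (starRingEnd ℂ) z₃ * (starRingEnd ℂ) z₄).im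
    (-I * z₂ * (starRingEnd ℂ) z₃ * (starRingEnd ℂ) z₄
        - 4 * (m : ℂ) * (starRingEnd ℂ) z₁ = 0 ∧
     -I * z₁ * (starRingEnd ℂ) z₃ * (starRingEnd ℂ) z₄
        - 4 * (m : ℂ) * (starRingEnd ℂ) z₂ = 0 ∧
     I * (starRingEnd ℂ) z₁ * (starRingEnd ℂ) z₂ * z₄
        - 4 * (m : ℂ) * (starRingEnd ℂ) z₃ = 0 ∧
     I * (starRingEnd ℂ) z₁ * (starRingEnd ℂ) z₂ * z₃
        - 4 * (m : ℂ) * (starRingEnd ℂ) z₄ = 0) ↔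
      (x₁ = 1 / 2 ∧ x₂ = 1 / 2 ∧ x₃ = 1 / 2 ∧ x₄ = 0 ∧
        (y₄ = 1 / 2 ∨ y₄ = -(1 / 2))) := by
  intro z₁ z₂ z₃ z₄ m
  have hm : m = -(x₁ * x₂ * x₃ * y₄) := im_ofReal_mul_ofReal_mul_conj ..
  have hm' : m = -(x₂ * x₁ * x₃ * y₄) := by rw [hm]; ring
  rw [zeta₁_eq x₄ y₄ hm, zeta₁_eq x₄ y₄ hm', zeta₃_eq x₄ y₄ hm, zeta₄_eq x₄ y₄ hm]
  simp only [ofReal_mul_add_ofReal_mul_I_eq_zero_iff (mul_pos h₂ h₃).ne',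
    ofReal_mul_add_ofReal_mul_I_eq_zero_iff (mul_pos h₁ h₃).ne',
    ofReal_mul_add_ofReal_mul_I_eq_zero_iff (mul_pos h₁ h₂).ne',
    ofReal_mul_add_ofReal_mul_I_eq_zero_iff (mul_pos (mul_pos h₁ h₂) h₃).ne']
  constructor
  · rintro ⟨⟨hx₁, -⟩, ⟨hx₂, -⟩, ⟨hx₃, hx₄⟩, -, hy₄⟩
    have hy₄ : 4 * y₄ ^ 2 = 1 := (sub_eq_zero.mp hy₄).symm
    have hy₀ : y₄ ≠ 0 := by rintro rfl; norm_num at hy₄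
    exact ⟨eq_one_half_of_four_sq_sub_one_mul_eq_zero h₁ hx₁ hy₀,
      eq_one_half_of_four_sq_sub_one_mul_eq_zero h₂ hx₂ hy₀,
      eq_one_half_of_four_sq_sub_one_mul_eq_zero h₃ hx₃ hy₀, hx₄, four_sq_eq_one_iff.mp hy₄⟩
  · rintro ⟨rfl, rfl, rfl, rfl, hy₄⟩
    have hy₄ := four_sq_eq_one_iff.mpr hy₄
    refine ⟨⟨?_, ?_⟩, ⟨?_, ?_⟩, ⟨?_, ?_⟩, ?_, ?_⟩ <;> linarith

theorem T3_associative_orbit_equations (x₁ x₂ x₃ x₄ y₄ : ℝ)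
    (h₁ : 0 < x₁) (h₂ : 0 < x₂) (h₃ : 0 < x₃)
    (hnorm : x₁ ^ 2 + x₂ ^ 2 + x₃ ^ 2 + x₄ ^ 2 + y₄ ^ 2 = 1) :
    let z₁ : ℂ := (x₁ : ℂ)
    let z₂ : ℂ := (x₂ : ℂ)
    let z₃ : ℂ := (x₃ : ℂ)
    let z₄ : ℂ := (x₄ : ℂ) + (y₄ : ℂ) * I
    let m : ℝ := (z₁ * z₂ * (starRingEnd ℂ) z₃ * (starRingEnd ℂ) z₄).im
    (-I * z₂ * (starRingEnd ℂ) z₃ * (starRingEnd ℂ) z₄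
        - 4 * (m : ℂ) * (starRingEnd ℂ) z₁ = 0 ∧
     -I * z₁ * (starRingEnd ℂ) z₃ * (starRingEnd ℂ) z₄
        - 4 * (m : ℂ) * (starRingEnd ℂ) z₂ = 0 ∧
     I * (starRingEnd ℂ) z₁ * (starRingEnd ℂ) z₂ * z₄
        - 4 * (m : ℂ) * (starRingEnd ℂ) z₃ = 0 ∧
     I * (starRingEnd ℂ) z₁ * (starRingEnd ℂ) z₂ * z₃
        - 4 * (m : ℂ) * (starRingEnd ℂ) z₄ = 0) ↔
      (x₁ = 1 / 2 ∧ x₂ = 1 / 2 ∧ x₃ = 1 / 2 ∧ x₄ = 0 ∧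
        (y₄ = 1 / 2 ∨ y₄ = -(1 / 2))) :=
  T3_associative_orbit_equations_general x₁ x₂ x₃ x₄ y₄ h₁ h₂ h₃
end

section
/- The point set A₁ = T³ · (1/2)(1,1,1,i) ⊂ S⁷, where T³ acts by (e^{iα},e^{iβ},e^{iγ})·z = (e^{i(α+β)}z₁, e^{i(α−β)}z₂, e^{i(α+γ)}z₃, e^{i(α−γ)}z₄), equals {(z₁,z₂,z₃,z₄) ∈ S⁷ : |z₁| = |z₂| = |z₃| = |z₄|, Re(z₁z₂z̄₃z̄₄) = 0, Im(z₁z₂z̄₃z̄₄) < 0}. -/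
/-!
The T³-action multiplies each coordinate by a unit complex number, so it preserves every modulus
|z_k| and, since the phases cancel, the product z₁z₂z̄₃z̄₄. Hence the orbit of (1/2)(1,1,1,i) lies
in the set where all |z_k| equal 1/2 and z₁z₂z̄₃z̄₄ = -i/16; on S⁷ with equal moduli this is exactly
the condition Re = 0, Im < 0. Conversely, α ± β and α + γ can be chosen to match the phases of
z₁, z₂, z₃, and then the value of the invariant product forces the phase of z₄.
-/

open Complex ComplexConjugate

noncomputable section

def torusAct (α β γ : ℝ) (z : Fin 4 → ℂ) : Fin 4 → ℂ :=
  ![exp (I * (α + β)) * z 0, exp (I * (α - β)) * z 1,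
    exp (I * (α + γ)) * z 2, exp (I * (α - γ)) * z 3]

def basePoint : Fin 4 → ℂ := ![1 / 2, 1 / 2, 1 / 2, I / 2]

def invariantProd (z : Fin 4 → ℂ) : ℂ := z 0 * z 1 * conj (z 2) * conj (z 3)

end

lemma norm_torusAct (α β γ : ℝ) (z : Fin 4 → ℂ) (i : Fin 4) :
    ‖torusAct α β γ z i‖ = ‖z i‖ := by
  fin_cases i <;> simp [torusAct, Complex.norm_exp]

lemma invariantProd_torusAct (α β γ : ℝ) (z : Fin 4 → ℂ) :
    invariantProd (torusAct α β γ z) = invariantProd z := by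
  have hphase : exp (I * (α + β)) * exp (I * (α - β)) * conj (exp (I * (α + γ))) *
      conj (exp (I * (α - γ))) = 1 := by
    simp only [← exp_conj, map_mul, map_add, map_sub, conj_I, conj_ofReal, ← exp_add]
    ring_nf
    exact exp_zero
  simp only [invariantProd, torusAct, Matrix.cons_val, map_mul]
  linear_combination (z 0 * z 1 * conj (z 2) * conj (z 3)) * hphase

lemma norm_basePoint (i : Fin 4) : ‖basePoint i‖ = 1 / 2 := by
  fin_cases i <;> simp [basePoint]

lemma invariantProd_basePoint : invariantProd basePoint = -I / 16 := by
  simp only [invariantProd, basePoint, Matrix.cons_val, map_div₀, map_one, conj_I, map_ofNat]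
  ring

lemma eq_neg_mul_I_iff_of_norm_eq {p : ℂ} {r : ℝ} (hr : 0 < r) (hp : ‖p‖ = r) :
    p = -(r * I) ↔ p.re = 0 ∧ p.im < 0 := by
  constructor
  · rintro rfl
    simpa using hr
  · rintro ⟨hre, him⟩
    have him_eq : p.im = -r := by
      rw [← hp, ← abs_im_eq_norm.mpr hre, abs_of_neg him, neg_neg]
    apply Complex.ext <;> simp [hre, him_eq]

lemma forall_norm_eq_half_iff (z : Fin 4 → ℂ) :
    (∀ i, ‖z i‖ = 1 / 2) ↔
      (∑ i, normSq (z i)) = 1 ∧ ‖z 0‖ = ‖z 1‖ ∧ ‖z 1‖ = ‖z 2‖ ∧ ‖z 2‖ = ‖z 3‖ := by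
  simp only [Fin.sum_univ_four, normSq_eq_norm_sq]
  constructor
  · intro h
    simp only [h]
    norm_num
  · rintro ⟨hsum, h01, h12, h23⟩
    have h0 : ‖z 0‖ = 1 / 2 := by
      rw [← h23, ← h12, ← h01] at hsum
      nlinarith [norm_nonneg (z 0)]
    intro i
    fin_cases i
    · exact h0
    · simp [← h01, h0]
    · simp [← h12, ← h01, h0]
    · simp [← h23, ← h12, ← h01, h0]

lemma invariantProd_eq_neg_I_div_sixteen_iff {z : Fin 4 → ℂ} (hnorm : ∀ i, ‖z i‖ = 1 / 2) :
    invariantProd z = -I / 16 ↔ (invariantProd z).re = 0 ∧ (invariantProd z).im < 0 := by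
  have hnorm_prod : ‖invariantProd z‖ = 1 / 16 := by
    simp only [invariantProd, norm_mul, RCLike.norm_conj, hnorm]
    norm_num
  rw [← eq_neg_mul_I_iff_of_norm_eq (by norm_num) hnorm_prod]
  push_cast
  ring_nf

lemma apply_three_eq_of_invariantProd_eq {w z : Fin 4 → ℂ} (h0 : w 0 = z 0) (h1 : w 1 = z 1)
    (h2 : w 2 = z 2) (hz : invariantProd z ≠ 0) (h : invariantProd w = invariantProd z) :
    w 3 = z 3 := by
  unfold invariantProd at h hz
  rw [h0, h1, h2] at h
  exact (starRingEnd ℂ).injective (mul_left_cancel₀ (left_ne_zero_of_mul hz) h)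

lemma exists_eq_torusAct_basePoint {z : Fin 4 → ℂ} (hnorm : ∀ i, ‖z i‖ = 1 / 2)
    (hprod : invariantProd z = -I / 16) : ∃ α β γ : ℝ, z = torusAct α β γ basePoint := by
  have hpolar (k : Fin 4) : z k = exp (I * arg (z k)) * (1 / 2) := by
    conv_lhs => rw [← norm_mul_exp_arg_mul_I (z k), hnorm k]
    push_cast
    ring_nf
  set α := (arg (z 0) + arg (z 1)) / 2
  set β := (arg (z 0) - arg (z 1)) / 2
  set γ := arg (z 2) - α
  set w := torusAct α β γ basePoint
  obtain ⟨h0, h1, h2⟩ : w 0 = z 0 ∧ w 1 = z 1 ∧ w 2 = z 2 := by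
    refine ⟨?_, ?_, ?_⟩ <;> rw [hpolar] <;>
      simp only [w, torusAct, basePoint, Matrix.cons_val] <;> congr 2 <;>
      push_cast [α, β, γ] <;> ring
  have h3 : w 3 = z 3 := apply_three_eq_of_invariantProd_eq h0 h1 h2 (by simp [hprod])
    (by rw [invariantProd_torusAct, invariantProd_basePoint, hprod])
  exact ⟨α, β, γ, funext fun i ↦ by fin_cases i <;> symm <;> assumption⟩

lemma setOf_exists_eq_torusAct_basePoint :
    {w | ∃ α β γ : ℝ, w = torusAct α β γ basePoint} =
      {z | (∀ i, ‖z i‖ = 1 / 2) ∧ invariantProd z = -I / 16} := by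
  ext z
  constructor
  · rintro ⟨α, β, γ, rfl⟩
    exact ⟨fun i ↦ (norm_torusAct α β γ _ i).trans (norm_basePoint i),
      (invariantProd_torusAct α β γ _).trans invariantProd_basePoint⟩
  · rintro ⟨hnorm, hprod⟩
    exact exists_eq_torusAct_basePoint hnorm hprod

theorem T3_orbit_description :
    {w : Fin 4 → ℂ | ∃ α β γ : ℝ,
      w = ![exp (I * (α + β)) * (1 / 2),
            exp (I * (α - β)) * (1 / 2),
            exp (I * (α + γ)) * (1 / 2),
            exp (I * (α - γ)) * (I / 2)]} =
    {z : Fin 4 → ℂ |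
      (∑ i, normSq (z i)) = 1 ∧
      ‖z 0‖ = ‖z 1‖ ∧ ‖z 1‖ = ‖z 2‖ ∧ ‖z 2‖ = ‖z 3‖ ∧
      (z 0 * z 1 * (starRingEnd ℂ) (z 2) * (starRingEnd ℂ) (z 3)).re = 0 ∧
      (z 0 * z 1 * (starRingEnd ℂ) (z 2) * (starRingEnd ℂ) (z 3)).im < 0} := by
  refine setOf_exists_eq_torusAct_basePoint.trans (Set.ext fun z ↦ ?_)
  have hnorm_iff := forall_norm_eq_half_iff z
  constructor
  · rintro ⟨hnorm, hprod⟩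
    obtain ⟨hsum, h01, h12, h23⟩ := hnorm_iff.1 hnorm
    exact ⟨hsum, h01, h12, h23, (invariantProd_eq_neg_I_div_sixteen_iff hnorm).1 hprod⟩
  · rintro ⟨hsum, h01, h12, h23, hsign⟩
    have hnorm := hnorm_iff.2 ⟨hsum, h01, h12, h23⟩
    exact ⟨hnorm, (invariantProd_eq_neg_I_div_sixteen_iff hnorm).2 hsign⟩
end

section
/- Let A be the orbit through p₀ = (z₁,z₂,z₃,z₄) ∈ S⁷ of the irreducible SU(2)-action, with tangent vectors E₁* = (√3z₄, −√3z₃, √3z₂−2z₄, −√3z₁+2z₃), E₂* = (√3iz₄, √3iz₃, √3iz₂+2iz₄, √3iz₁+2iz₃), E₃* = (3iz₁, −3iz₂, −iz₃, iz₄). If E₁*, E₂*, E₃* are mutually orthogonal at p₀ (w.r.t. the real inner product on ℂ⁴), |E₁*|² = |E₂*|², and additionally z₁z̄₄ − z̄₂z₃ = 0 and z₁z̄₃ + z̄₂z₄ = 0, then either z₁ = z₂ = 0 or z₃ = z₄ = 0. -/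
open Complex

/-- The real inner product Re⟨u,v⟩ on ℂ⁴ ≅ ℝ⁸. -/
noncomputable def reInner (u v : Fin 4 → ℂ) : ℝ :=
  (∑ i, (starRingEnd ℂ) (u i) * v i).re

theorem eq_zero_and_eq_zero_of_det_ne_zero {R : Type*} [CommRing R] [NoZeroDivisors R]
    {a b c d x y : R} (h₁ : a * x + b * y = 0) (h₂ : c * x + d * y = 0)
    (hdet : a * d - b * c ≠ 0) : x = 0 ∧ y = 0 := by
  have hx : x * (a * d - b * c) = 0 := by linear_combination d * h₁ - b * h₂
  have hy : y * (a * d - b * c) = 0 := by linear_combination a * h₂ - c * h₁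
  exact ⟨(mul_eq_zero.mp hx).resolve_right hdet, (mul_eq_zero.mp hy).resolve_right hdet⟩

theorem Complex.normSq_add_normSq_eq_zero {z w : ℂ} :
    normSq z + normSq w = 0 ↔ z = 0 ∧ w = 0 := by
  rw [add_eq_zero_iff_of_nonneg (normSq_nonneg z) (normSq_nonneg w), normSq_eq_zero,
    normSq_eq_zero]

theorem SU2_orbit_case2_general (z₁ z₂ z₃ z₄ : ℂ) :
    let c := starRingEnd ℂ
    let r3 : ℂ := (Real.sqrt 3 : ℝ)
    let E₁ : Fin 4 → ℂ := ![r3 * z₄, -(r3 * z₃), r3 * z₂ - 2 * z₄, -(r3 * z₁) + 2 * z₃]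
    let E₂ : Fin 4 → ℂ := ![r3 * I * z₄, r3 * I * z₃,
      r3 * I * z₂ + 2 * I * z₄, r3 * I * z₁ + 2 * I * z₃]
    let E₃ : Fin 4 → ℂ := ![3 * I * z₁, -(3 * I * z₂), -(I * z₃), I * z₄]
    reInner E₁ E₂ = 0 → reInner E₁ E₃ = 0 → reInner E₂ E₃ = 0 →
    reInner E₁ E₁ = reInner E₂ E₂ →
    z₁ * c z₄ - c z₂ * z₃ = 0 → z₁ * c z₃ + c z₂ * z₄ = 0 →
    (z₁ = 0 ∧ z₂ = 0) ∨ (z₃ = 0 ∧ z₄ = 0) := by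
  intro c r3 E₁ E₂ E₃ _ _ _ _ h₁₄ h₁₃
  by_cases h₃₄ : z₃ = 0 ∧ z₄ = 0
  · exact Or.inr h₃₄
  -- `(z₁, -c z₂)` solves a 2 × 2 linear system of determinant `-(|z₃|² + |z₄|²)`.
  have hdet : c z₄ * -z₄ - z₃ * c z₃ ≠ 0 := by
    have hdet_eq : c z₄ * -z₄ - z₃ * c z₃ = -((normSq z₃ + normSq z₄ : ℝ) : ℂ) := by
      push_cast
      rw [← mul_conj, ← mul_conj]
      ring
    rw [hdet_eq, neg_ne_zero, ofReal_ne_zero]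
    exact mt normSq_add_normSq_eq_zero.mp h₃₄
  obtain ⟨hz₁, hz₂⟩ := eq_zero_and_eq_zero_of_det_ne_zero (x := z₁) (y := -c z₂)
    (by linear_combination h₁₄) (by linear_combination h₁₃) hdet
  exact Or.inl ⟨hz₁, by simpa using hz₂⟩

theorem SU2_orbit_case2 (z₁ z₂ z₃ z₄ : ℂ)
    (hnorm : normSq z₁ + normSq z₂ + normSq z₃ + normSq z₄ = 1) :
    let c := starRingEnd ℂ
    let r3 : ℂ := (Real.sqrt 3 : ℝ)
    let E₁ : Fin 4 → ℂ := ![r3 * z₄, -(r3 * z₃), r3 * z₂ - 2 * z₄, -(r3 * z₁) + 2 * z₃]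
    let E₂ : Fin 4 → ℂ := ![r3 * I * z₄, r3 * I * z₃,
      r3 * I * z₂ + 2 * I * z₄, r3 * I * z₁ + 2 * I * z₃]
    let E₃ : Fin 4 → ℂ := ![3 * I * z₁, -(3 * I * z₂), -(I * z₃), I * z₄]
    reInner E₁ E₂ = 0 → reInner E₁ E₃ = 0 → reInner E₂ E₃ = 0 →
    reInner E₁ E₁ = reInner E₂ E₂ →
    z₁ * c z₄ - c z₂ * z₃ = 0 → z₁ * c z₃ + c z₂ * z₄ = 0 →
    (z₁ = 0 ∧ z₂ = 0) ∨ (z₃ = 0 ∧ z₄ = 0) :=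
  SU2_orbit_case2_general z₁ z₂ z₃ z₄
end

section
/- Let e₁ = pE₁, e₂ = pE₂, e₃ = qE₃ be an orthonormal frame of su(2) (p,q ∈ ℝ nonzero) with brackets [e₁,e₂] = (2p²/q)e₃, [e₂,e₃] = 2qe₁, [e₃,e₁] = 2qe₂. Then for Δ₊ = −(e₁² + e₂² + e₃²) acting on matrix coefficients, Δ₊⟨ρ_n(·)v_k^{(n)},u⟩ = ((−p²+q²)(n−2k)² + p²(n²+2n))⟨ρ_n(·)v_k^{(n)},u⟩. -/
open Complex MvPolynomial

namespace SU2Casimir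

/-- The unitary basis vector v_k^{(n)} = z₁^{n−k} z₂^k / √(k!(n−k)!). -/
noncomputable def v (n k : ℕ) : MvPolynomial (Fin 2) ℂ :=
  ((1 / Real.sqrt (k.factorial * (n - k).factorial) : ℝ) : ℂ) •
    (X 0 ^ (n - k) * X 1 ^ k)

/-- (dρ_n(A)v)(z₁,z₂) = (∂v/∂z₁, ∂v/∂z₂) ᵗA (z₁,z₂)ᵗ. -/
noncomputable def drho (A : Matrix (Fin 2) (Fin 2) ℂ) (p : MvPolynomial (Fin 2) ℂ) :
    MvPolynomial (Fin 2) ℂ :=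
  pderiv 0 p * (C (A 0 0) * X 0 + C (A 1 0) * X 1)
    + pderiv 1 p * (C (A 0 1) * X 0 + C (A 1 1) * X 1)

noncomputable def E₁ : Matrix (Fin 2) (Fin 2) ℂ := !![0, 1; -1, 0]
noncomputable def E₂ : Matrix (Fin 2) (Fin 2) ℂ := !![0, I; I, 0]
noncomputable def E₃ : Matrix (Fin 2) (Fin 2) ℂ := !![I, 0; 0, -I]

/-!
Write `R = z₁ ∂/∂z₂` and `L = z₂ ∂/∂z₁`. Then `dρ(E₁) = R - L` and `dρ(E₂) = i (R + L)`, so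
`dρ(E₁)² + dρ(E₂)² = -2 (RL + LR)`. On the monomial `z₁^a z₂^b` the operators `RL`, `LR` and
`dρ(E₃)` act by the scalars `a (b + 1)`, `(a + 1) b` and `i (a - b)`, and with `a + b = n`,
`a - b = n - 2k` one has `2 (2ab + a + b) = n² + 2n - (n - 2k)²`.
-/

local notation "𝒫" => MvPolynomial (Fin 2) ℂ

noncomputable def raising : Module.End ℂ 𝒫 :=
  LinearMap.mulLeft ℂ (X 0) ∘ₗ (pderiv 1 : Derivation ℂ 𝒫 𝒫).toLinearMap

noncomputable def lowering : Module.End ℂ 𝒫 :=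
  LinearMap.mulLeft ℂ (X 1) ∘ₗ (pderiv 0 : Derivation ℂ 𝒫 𝒫).toLinearMap

noncomputable def laplacian (p q : ℂ) (f : 𝒫) : 𝒫 :=
  -(drho (p • E₁) (drho (p • E₁) f) + drho (p • E₂) (drho (p • E₂) f)
    + drho (q • E₃) (drho (q • E₃) f))

lemma drho_smul_left (c : ℂ) (A : Matrix (Fin 2) (Fin 2) ℂ) (f : 𝒫) :
    drho (c • A) f = c • drho A f := by
  simp only [drho, Matrix.smul_apply, smul_eq_mul, map_mul, smul_eq_C_mul]
  ring

lemma drho_smul (A : Matrix (Fin 2) (Fin 2) ℂ) (c : ℂ) (f : 𝒫) :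
    drho A (c • f) = c • drho A f := by
  simp only [drho, smul_eq_C_mul, pderiv_C_mul]
  ring

lemma drho_E₁ (f : 𝒫) : drho E₁ f = (raising - lowering) f := by
  simp only [drho, E₁, raising, lowering, Matrix.of_apply, Matrix.cons_val', Matrix.cons_val_zero,
    Matrix.cons_val_one, Matrix.cons_val_fin_one, map_zero, map_one, map_neg, LinearMap.sub_apply,
    LinearMap.comp_apply, Derivation.coeFn_coe, LinearMap.mulLeft_apply]
  ring

lemma drho_E₂ (f : 𝒫) : drho E₂ f = (I • (raising + lowering)) f := by
  simp only [drho, E₂, raising, lowering, Matrix.of_apply, Matrix.cons_val', Matrix.cons_val_zero,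
    Matrix.cons_val_one, Matrix.cons_val_fin_one, map_zero, LinearMap.smul_apply,
    LinearMap.add_apply, LinearMap.comp_apply, Derivation.coeFn_coe, LinearMap.mulLeft_apply,
    smul_eq_C_mul]
  ring

lemma drho_E₃_monomial (a b : ℕ) :
    drho E₃ (X 0 ^ a * X 1 ^ b : 𝒫) = (I * (a - b)) • (X 0 ^ a * X 1 ^ b) := by
  rcases a with _ | a <;> rcases b with _ | b <;>
    simp [drho, E₃, smul_eq_C_mul] <;> ring

lemma raising_lowering_monomial (a b : ℕ) :
    raising (lowering (X 0 ^ a * X 1 ^ b : 𝒫)) = (a * (b + 1) : ℂ) • (X 0 ^ a * X 1 ^ b) := by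
  rcases a with _ | a <;> rcases b with _ | b <;>
    simp [raising, lowering, smul_eq_C_mul] <;> ring

lemma lowering_raising_monomial (a b : ℕ) :
    lowering (raising (X 0 ^ a * X 1 ^ b : 𝒫)) = ((a + 1) * b : ℂ) • (X 0 ^ a * X 1 ^ b) := by
  rcases a with _ | a <;> rcases b with _ | b <;>
    simp [raising, lowering, smul_eq_C_mul] <;> ring

lemma drho_E₁_sq_add_drho_E₂_sq (f : 𝒫) :
    drho E₁ (drho E₁ f) + drho E₂ (drho E₂ f)
      = (-2 : ℂ) • (raising (lowering f) + lowering (raising f)) := by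
  simp only [drho_E₁, drho_E₂, ← Module.End.mul_apply, ← LinearMap.add_apply,
    ← LinearMap.smul_apply]
  congr 1
  rw [smul_mul_smul, I_mul_I]
  simp only [mul_sub, sub_mul, mul_add, add_mul]
  module

lemma laplacian_smul (p q c : ℂ) (f : 𝒫) : laplacian p q (c • f) = c • laplacian p q f := by
  simp only [laplacian, drho_smul, smul_add, smul_neg]

lemma laplacian_eq (p q : ℂ) (f : 𝒫) :
    laplacian p q f = -((p * p) • (drho E₁ (drho E₁ f) + drho E₂ (drho E₂ f))
      + (q * q) • drho E₃ (drho E₃ f)) := by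
  simp only [laplacian, drho_smul_left, drho_smul, smul_add, smul_smul]

lemma laplacian_monomial (p q : ℂ) (a b : ℕ) :
    laplacian p q (X 0 ^ a * X 1 ^ b)
      = ((-p ^ 2 + q ^ 2) * ((a : ℂ) - b) ^ 2 + p ^ 2 * (((a + b : ℕ) : ℂ) ^ 2 + 2 * (a + b : ℕ)))
          • (X 0 ^ a * X 1 ^ b) := by
  have h₁₂ : drho E₁ (drho E₁ (X 0 ^ a * X 1 ^ b)) + drho E₂ (drho E₂ (X 0 ^ a * X 1 ^ b))
      = (-2 * (a * (b + 1) + (a + 1) * b) : ℂ) • (X 0 ^ a * X 1 ^ b) := by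
    rw [drho_E₁_sq_add_drho_E₂_sq, raising_lowering_monomial, lowering_raising_monomial]
    module
  have h₃ : drho E₃ (drho E₃ (X 0 ^ a * X 1 ^ b))
      = (-((a : ℂ) - b) ^ 2) • (X 0 ^ a * X 1 ^ b) := by
    rw [drho_E₃_monomial, drho_smul, drho_E₃_monomial, smul_smul]
    congr 1
    linear_combination ((a : ℂ) - b) ^ 2 * I_sq
  rw [laplacian_eq, h₁₂, h₃]
  match_scalars
  ring

theorem casimir_eigenvalue_general (p q : ℝ) (n k : ℕ)
    (hk : k ≤ n) :
    -(drho ((p : ℂ) • E₁) (drho ((p : ℂ) • E₁) (v n k))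
      + drho ((p : ℂ) • E₂) (drho ((p : ℂ) • E₂) (v n k))
      + drho ((q : ℂ) • E₃) (drho ((q : ℂ) • E₃) (v n k)))
    = (((((-(p ^ 2) + q ^ 2) * ((n : ℝ) - 2 * k) ^ 2
          + p ^ 2 * ((n : ℝ) ^ 2 + 2 * n)) : ℝ)) : ℂ) • v n k := by
  change laplacian p q (v n k) = _
  rw [v, laplacian_smul, laplacian_monomial, smul_comm, Nat.sub_add_cancel hk]
  congr 1
  push_cast [Nat.cast_sub hk]
  ring

theorem casimir_eigenvalue (p q : ℝ) (hp : p ≠ 0) (hq : q ≠ 0) (n k : ℕ)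
    (hk : k ≤ n) :
    -(drho ((p : ℂ) • E₁) (drho ((p : ℂ) • E₁) (v n k))
      + drho ((p : ℂ) • E₂) (drho ((p : ℂ) • E₂) (v n k))
      + drho ((q : ℂ) • E₃) (drho ((q : ℂ) • E₃) (v n k)))
    = (((((-(p ^ 2) + q ^ 2) * ((n : ℝ) - 2 * k) ^ 2
          + p ^ 2 * ((n : ℝ) ^ 2 + 2 * n)) : ℝ)) : ℂ) • v n k :=
  casimir_eigenvalue_general p q n k hk

end SU2Casimir
end
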